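/- For every b > 0, the set ∪_{m=1}^∞ ∪_{n=1}^∞ E_{b/m, n} is of first Baire category (meagre) in the metric space (F, d). -/

import Mathlib

noncomputable section

abbrev Vc : Type := EuclideanSpace ℂ (Fin 2)

/-- Euclidean norm of a lattice point `k ∈ ℤ²`. -/
def knorm (k : ℤ × ℤ) : ℝ := Real.sqrt ((k.1 : ℝ) ^ 2 + (k.2 : ℝ) ^ 2)

/-- The reality condition `û(-k) = conj (û(k))`. -/
def IsRealCond (u : ℤ × ℤ → Vc) : Prop :=
  ∀ k : ℤ × ℤ, ∀ i : Fin 2, u (-k) i = starRingEnd ℂ (u k i)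

/-- Divergence-free condition `k ⬝ û(k) = 0`. -/
def DivFree (u : ℤ × ℤ → Vc) : Prop :=
  ∀ k : ℤ × ℤ, (k.1 : ℂ) * u k 0 + (k.2 : ℂ) * u k 1 = 0

/-- Membership in the Fourier model of the phase space `H`. -/
def InH (u : ℤ × ℤ → Vc) : Prop := u 0 = 0 ∧ IsRealCond u ∧ DivFree u

/-- `|A^{α/2} u|²  =  L² Σ_{k≠0} (κ₀|k|)^{2α} |û(k)|²` for natural `α`. -/
def sqA (L κ₀ : ℝ) (u : ℤ × ℤ → Vc) (α : ℕ) : ℝ :=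
  L ^ 2 * ∑' k : ℤ × ℤ, (κ₀ * knorm k) ^ (2 * α) * ‖u k‖ ^ 2

/-- Finiteness of `|A^{α/2}u|` for natural `α`. -/
def SummableA (κ₀ : ℝ) (u : ℤ × ℤ → Vc) (α : ℕ) : Prop :=
  Summable fun k : ℤ × ℤ => (κ₀ * knorm k) ^ (2 * α) * ‖u k‖ ^ 2

/-- The class `C(σ)`. -/
def InC (L κ₀ ν σ : ℝ) (u : ℤ × ℤ → Vc) : Prop :=
  (∀ α : ℕ, SummableA κ₀ u α) ∧
  ∃ c₀ : ℝ, ∀ α : ℕ,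
    sqA L κ₀ u α ≤ c₀ * Real.exp (σ * (α : ℝ) ^ 2) * ν ^ 2 * κ₀ ^ (2 * α)

/-- The summand of `|u|_b²`. -/
def ebTerm (b : ℝ) (u : ℤ × ℤ → Vc) (k : ℤ × ℤ) : ℝ :=
  Real.exp (2 * b * (Real.log (knorm k + Real.exp 1)) ^ 2) * ‖u k‖ ^ 2

/-- `|u|_b² = L² Σ_{k≠0} e^{2b(ln(|k|+e))²} |û(k)|²`. -/
def ebSq (L b : ℝ) (u : ℤ × ℤ → Vc) : ℝ := L ^ 2 * ∑' k : ℤ × ℤ, ebTerm b u k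

/-- The Fourier model of `F = C^∞ ∩ H`: elements of `H` with `|A^{α/2}u| < ∞`
for every `α ∈ ℕ`. -/
def Fs (L κ₀ : ℝ) : Type := {u : ℤ × ℤ → Vc // InH u ∧ ∀ α : ℕ, SummableA κ₀ u α}

/-- `|A^{α/2} w| = (L² Σ_{k≠0} (κ₀|k|)^{2α} |ŵ(k)|²)^{1/2}`. -/
def nA (L κ₀ : ℝ) (w : ℤ × ℤ → Vc) (α : ℕ) : ℝ := Real.sqrt (sqA L κ₀ w α)

/-- The Fréchet metric
`d(u,v) = Σ_{α=1}^∞ 2^{-α} |A^{α/2}(u-v)| / (1 + |A^{α/2}(u-v)|)`. -/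
def dF (L κ₀ : ℝ) (u v : Fs L κ₀) : ℝ :=
  ∑' α : ℕ, (1 / 2 ^ (α + 1)) *
    (nA L κ₀ (fun k => u.1 k - v.1 k) (α + 1) /
      (1 + nA L κ₀ (fun k => u.1 k - v.1 k) (α + 1)))

/-- The topology on `(F, d)` generated by the open balls of the metric `d`. -/
noncomputable instance topF (L κ₀ : ℝ) : TopologicalSpace (Fs L κ₀) :=
  TopologicalSpace.generateFrom
    {B | ∃ x : Fs L κ₀, ∃ r : ℝ, B = {y : Fs L κ₀ | dF L κ₀ x y < r}}

/-- The set `E_{b,n} = {u ∈ E_b : |u|_b ≤ n}`, viewed as a subset of `F`. -/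
def EbnSet (L κ₀ b : ℝ) (n : ℕ) : Set (Fs L κ₀) :=
  {u : Fs L κ₀ | Summable (ebTerm b u.1) ∧
    Real.sqrt (L ^ 2 * ∑' k : ℤ × ℤ, ebTerm b u.1 k) ≤ n}

/-! Each `E_{b,n}` is nowhere dense in `(F, d)`. Membership in `E_{b,n}` forces
`|û(k)| ≤ (n/L) e^{-b (ln(|k|+e))²}`, and such a pointwise bound on one coefficient is a closed
condition in `F`, because `d` dominates every coefficient. Perturbing `v ∈ E_{b,n}` by the shear
mode at frequency `(j,0)` whose amplitude exceeds twice that bound gives points outside the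
closure of `E_{b,n}`; as `e^{-b (ln(j+e))²}` decays faster than any power of `j`, they converge
to `v` in every seminorm `|A^{α/2}·|`, hence in `d`. So the closure of `E_{b,n}` is a
neighbourhood of none of its points, and a countable union of such sets is meagre. -/

open Filter Topology

theorem Real.sqrt_tsum_sq_le_add {ι : Type*} {f g h : ι → ℝ} (hf : ∀ i, 0 ≤ f i)
    (hg : ∀ i, 0 ≤ g i) (hh : ∀ i, 0 ≤ h i) (hfgh : ∀ i, h i ≤ f i + g i)
    (sf : Summable fun i => f i ^ 2) (sg : Summable fun i => g i ^ 2) :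
    (Summable fun i => h i ^ 2) ∧
      √(∑' i, h i ^ 2) ≤ √(∑' i, f i ^ 2) + √(∑' i, g i ^ 2) := by
  obtain ⟨hs, hle⟩ := Real.Lp_add_le_tsum_of_nonneg (p := 2) one_le_two hf hg
    (by simpa only [Real.rpow_two] using sf) (by simpa only [Real.rpow_two] using sg)
  simp only [Real.rpow_two, ← Real.sqrt_eq_rpow] at hs hle
  have hsq : ∀ i, h i ^ 2 ≤ (f i + g i) ^ 2 := fun i => pow_le_pow_left₀ (hh i) (hfgh i) 2
  have hs' : Summable fun i => h i ^ 2 := hs.of_nonneg_of_le (fun i => sq_nonneg _) hsq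
  exact ⟨hs', (Real.sqrt_le_sqrt (hs'.tsum_le_tsum hsq hs)).trans hle⟩

lemma div_one_add_le_div_one_add {a b : ℝ} (ha : 0 ≤ a) (hab : a ≤ b) :
    a / (1 + a) ≤ b / (1 + b) := by
  rw [div_le_div_iff₀ (by linarith) (by linarith)]
  linarith

lemma div_one_add_le_add_of_le_add {a b c : ℝ} (ha : 0 ≤ a) (hb : 0 ≤ b) (hc : 0 ≤ c)
    (h : c ≤ a + b) : c / (1 + c) ≤ a / (1 + a) + b / (1 + b) := by
  refine (div_one_add_le_div_one_add hc h).trans ?_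
  rw [div_add_div _ _ (by positivity) (by positivity),
    div_le_div_iff₀ (by positivity) (by positivity)]
  nlinarith [mul_nonneg (mul_nonneg ha hb) (add_nonneg ha hb), mul_nonneg ha hb]

lemma tendsto_pow_mul_exp_neg_mul_log_sq {b : ℝ} (hb : 0 < b) (N : ℕ) :
    Tendsto (fun x : ℝ => x ^ N * Real.exp (-(b * Real.log x ^ 2))) atTop (𝓝 0) := by
  have hpoly : Tendsto (fun y : ℝ => y * (N + -b * y)) atTop atBot :=
    tendsto_id.atTop_mul_atBot₀
      (tendsto_atBot_add_const_left _ _ (tendsto_id.const_mul_atTop_of_neg (neg_lt_zero.2 hb)))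
  refine (Real.tendsto_exp_atBot.comp (hpoly.comp Real.tendsto_log_atTop)).congr'
    ((eventually_gt_atTop 0).mono fun x hx => ?_)
  simp only [Function.comp_apply]
  rw [← Real.exp_log (pow_pos hx N), ← Real.exp_add, Real.log_pow]
  ring_nf

lemma tendsto_pow_mul_exp_neg_mul_log_add_sq {b : ℝ} (hb : 0 < b) (N : ℕ) :
    Tendsto (fun x : ℝ => x ^ N * Real.exp (-(b * Real.log (x + Real.exp 1) ^ 2))) atTop
      (𝓝 0) := by
  refine squeeze_zero' ((eventually_ge_atTop 0).mono fun x hx => by positivity)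
    ((eventually_ge_atTop 0).mono fun x hx => ?_)
    ((tendsto_pow_mul_exp_neg_mul_log_sq hb N).comp
      (tendsto_atTop_add_const_right _ (Real.exp 1) tendsto_id))
  simp only [Function.comp_apply, id]
  gcongr
  linarith [Real.exp_pos 1]

lemma knorm_pos {k : ℤ × ℤ} (hk : k ≠ 0) : 0 < knorm k := by
  obtain ⟨a, b⟩ := k
  have hab : a ≠ 0 ∨ b ≠ 0 := by
    by_contra! h
    exact hk (by simp [h.1, h.2])
  refine Real.sqrt_pos.2 ?_
  rcases hab with h | h <;> positivity

lemma knorm_natCast_zero (j : ℕ) : knorm ((j : ℤ), 0) = j := by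
  simp [knorm]

section WeightedSeminorms

variable {L κ₀ : ℝ} {u v w : ℤ × ℤ → Vc} {α : ℕ}

lemma weight_mul_norm_sq (κ₀ : ℝ) (u : ℤ × ℤ → Vc) (α : ℕ) (k : ℤ × ℤ) :
    (κ₀ * knorm k) ^ (2 * α) * ‖u k‖ ^ 2 = (|κ₀ * knorm k| ^ α * ‖u k‖) ^ 2 := by
  rw [mul_pow (|_| ^ α), ← pow_mul, mul_comm α 2, pow_mul, pow_mul, sq_abs]

lemma summableA_iff :
    SummableA κ₀ u α ↔ Summable fun k => (|κ₀ * knorm k| ^ α * ‖u k‖) ^ 2 := by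
  simp only [SummableA, weight_mul_norm_sq]

lemma nA_eq_abs_mul_sqrt (L κ₀ : ℝ) (u : ℤ × ℤ → Vc) (α : ℕ) :
    nA L κ₀ u α = |L| * √(∑' k, (|κ₀ * knorm k| ^ α * ‖u k‖) ^ 2) := by
  rw [nA, sqA, Real.sqrt_mul (sq_nonneg L), Real.sqrt_sq_eq_abs]
  simp only [weight_mul_norm_sq]

lemma nA_nonneg (w : ℤ × ℤ → Vc) (α : ℕ) : 0 ≤ nA L κ₀ w α := Real.sqrt_nonneg _

lemma SummableA.of_norm_le_add (hu : SummableA κ₀ u α) (hv : SummableA κ₀ v α)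
    (h : ∀ k, ‖w k‖ ≤ ‖u k‖ + ‖v k‖) : SummableA κ₀ w α := by
  rw [summableA_iff] at *
  refine (Real.sqrt_tsum_sq_le_add (fun _ => by positivity) (fun _ => by positivity)
    (fun _ => by positivity) (fun k => ?_) hu hv).1
  rw [← mul_add]
  exact mul_le_mul_of_nonneg_left (h k) (by positivity)

lemma SummableA.add (hu : SummableA κ₀ u α) (hv : SummableA κ₀ v α) :
    SummableA κ₀ (u + v) α :=
  hu.of_norm_le_add hv fun _ => norm_add_le _ _

lemma SummableA.sub (hu : SummableA κ₀ u α) (hv : SummableA κ₀ v α) :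
    SummableA κ₀ (fun k => u k - v k) α :=
  hu.of_norm_le_add hv fun _ => norm_sub_le _ _

lemma nA_le_add_of_norm_le (hu : SummableA κ₀ u α) (hv : SummableA κ₀ v α)
    (h : ∀ k, ‖w k‖ ≤ ‖u k‖ + ‖v k‖) : nA L κ₀ w α ≤ nA L κ₀ u α + nA L κ₀ v α := by
  rw [summableA_iff] at hu hv
  simp only [nA_eq_abs_mul_sqrt, ← mul_add]
  refine mul_le_mul_of_nonneg_left (Real.sqrt_tsum_sq_le_add (fun _ => by positivity)
    (fun _ => by positivity) (fun _ => by positivity) (fun k => ?_) hu hv).2 (abs_nonneg L)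
  rw [← mul_add]
  exact mul_le_mul_of_nonneg_left (h k) (by positivity)

lemma le_nA_one (hw : SummableA κ₀ w 1) (k : ℤ × ℤ) :
    |L| * |κ₀ * knorm k| * ‖w k‖ ≤ nA L κ₀ w 1 := by
  rw [summableA_iff] at hw
  rw [nA_eq_abs_mul_sqrt, mul_assoc]
  gcongr
  calc |κ₀ * knorm k| * ‖w k‖ = √((|κ₀ * knorm k| ^ 1 * ‖w k‖) ^ 2) := by
        rw [pow_one, Real.sqrt_sq (by positivity)]
    _ ≤ √(∑' k, (|κ₀ * knorm k| ^ 1 * ‖w k‖) ^ 2) :=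
        Real.sqrt_le_sqrt (hw.le_tsum k fun _ _ => sq_nonneg _)

end WeightedSeminorms

section FrechetMetric

variable {L κ₀ : ℝ}

lemma norm_dF_term_le {x : ℝ} (hx : 0 ≤ x) (α : ℕ) :
    ‖1 / 2 ^ (α + 1) * (x / (1 + x))‖ ≤ (1 / 2) ^ (α + 1) := by
  rw [Real.norm_of_nonneg (by positivity), one_div_pow]
  exact mul_le_of_le_one_right (by positivity) ((div_le_one (by positivity)).2 (by linarith))

lemma summable_dF_series (w : ℤ × ℤ → Vc) :
    Summable fun α : ℕ => 1 / 2 ^ (α + 1) * (nA L κ₀ w (α + 1) / (1 + nA L κ₀ w (α + 1))) :=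
  ((summable_nat_add_iff 1).mpr summable_geometric_two).of_norm_bounded
    fun α => norm_dF_term_le (nA_nonneg _ _) α

lemma dF_self (u : Fs L κ₀) : dF L κ₀ u u = 0 := by
  simp [dF, nA, sqA]

lemma dF_triangle (u v w : Fs L κ₀) : dF L κ₀ u w ≤ dF L κ₀ u v + dF L κ₀ v w := by
  rw [dF, dF, dF, ← (summable_dF_series _).tsum_add (summable_dF_series _)]
  refine (summable_dF_series _).tsum_le_tsum (fun α => ?_)
    ((summable_dF_series _).add (summable_dF_series _))
  rw [← mul_add]
  gcongr
  refine div_one_add_le_add_of_le_add (nA_nonneg _ _) (nA_nonneg _ _) (nA_nonneg _ _)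
    (nA_le_add_of_norm_le ((u.2.2 _).sub (v.2.2 _)) ((v.2.2 _).sub (w.2.2 _)) fun k => ?_)
  exact norm_sub_le_norm_sub_add_norm_sub _ _ _

lemma half_div_one_add_le_dF {x : ℝ} (hx : 0 ≤ x) {u v : Fs L κ₀} {k : ℤ × ℤ}
    (hxk : x ≤ |L| * |κ₀ * knorm k| * ‖u.1 k - v.1 k‖) : x / (1 + x) / 2 ≤ dF L κ₀ u v := by
  have hfirst := (summable_dF_series (L := L) (κ₀ := κ₀) fun k => u.1 k - v.1 k).le_tsum 0
    fun α _ => by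
      have := nA_nonneg (L := L) (κ₀ := κ₀) (fun k => u.1 k - v.1 k) (α + 1)
      positivity
  have hmono := div_one_add_le_div_one_add hx (hxk.trans (le_nA_one ((u.2.2 1).sub (v.2.2 1)) k))
  rw [dF]
  simp only [zero_add, pow_one] at hfirst
  linarith

def Fs.ball (u : Fs L κ₀) (r : ℝ) : Set (Fs L κ₀) := {y | dF L κ₀ u y < r}

lemma Fs.isOpen_ball (u : Fs L κ₀) (r : ℝ) : IsOpen (u.ball r) :=
  TopologicalSpace.isOpen_generateFrom_of_mem ⟨u, r, rfl⟩

lemma Fs.exists_ball_subset_of_isOpen {U : Set (Fs L κ₀)} (hU : IsOpen U) {u : Fs L κ₀}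
    (hu : u ∈ U) : ∃ δ > 0, u.ball δ ⊆ U := by
  induction hU generalizing u with
  | basic V hV =>
    obtain ⟨x, r, rfl⟩ := hV
    refine ⟨r - dF L κ₀ x u, sub_pos.2 hu, fun y hy => ?_⟩
    have := dF_triangle x u y
    change dF L κ₀ u y < _ at hy
    change dF L κ₀ x y < r
    linarith
  | univ => exact ⟨1, one_pos, Set.subset_univ _⟩
  | inter V W _ _ ihV ihW =>
    obtain ⟨δ₁, h₁, hV⟩ := ihV hu.1
    obtain ⟨δ₂, h₂, hW⟩ := ihW hu.2
    exact ⟨min δ₁ δ₂, lt_min h₁ h₂, fun y (hy : dF L κ₀ u y < _) =>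
      ⟨hV (hy.trans_le (min_le_left _ _)), hW (hy.trans_le (min_le_right _ _))⟩⟩
  | sUnion S _ ih =>
    obtain ⟨V, hVS, huV⟩ := hu
    obtain ⟨δ, hδ, hV⟩ := ih V hVS huV
    exact ⟨δ, hδ, hV.trans (Set.subset_sUnion_of_mem hVS)⟩

lemma Fs.hasBasis_nhds (u : Fs L κ₀) : (𝓝 u).HasBasis (0 < ·) u.ball := by
  refine ⟨fun U => ⟨fun hU => ?_, fun ⟨δ, hδ, hball⟩ => Filter.mem_of_superset ?_ hball⟩⟩
  · obtain ⟨V, hVU, hV, huV⟩ := mem_nhds_iff.1 hU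
    obtain ⟨δ, hδ, hball⟩ := exists_ball_subset_of_isOpen hV huV
    exact ⟨δ, hδ, hball.trans hVU⟩
  · exact (u.isOpen_ball δ).mem_nhds (by simpa [Fs.ball, dF_self] using hδ)

lemma Fs.tendsto_of_tendsto_sqA {ι : Type*} {l : Filter ι} {v : Fs L κ₀} {w : ι → Fs L κ₀}
    (h : ∀ α, Tendsto (fun i => sqA L κ₀ (fun k => v.1 k - (w i).1 k) α) l (𝓝 0)) :
    Tendsto w l (𝓝 v) := by
  have hterm : ∀ α : ℕ, Tendsto (fun i => 1 / 2 ^ (α + 1) *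
      (nA L κ₀ (fun k => v.1 k - (w i).1 k) (α + 1) /
        (1 + nA L κ₀ (fun k => v.1 k - (w i).1 k) (α + 1)))) l (𝓝 0) := fun α => by
    have hnA : Tendsto (fun i => nA L κ₀ (fun k => v.1 k - (w i).1 k) (α + 1)) l (𝓝 0) := by
      have := (h (α + 1)).sqrt
      rwa [Real.sqrt_zero] at this
    have := (hnA.div (tendsto_const_nhds.add hnA) (by norm_num : (1 : ℝ) + 0 ≠ 0)).const_mul
      (1 / 2 ^ (α + 1) : ℝ)
    rwa [add_zero, zero_div, mul_zero] at this
  have hdF : Tendsto (fun i => dF L κ₀ v (w i)) l (𝓝 0) := by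
    have := tendsto_tsum_of_dominated_convergence
      ((summable_nat_add_iff 1).mpr summable_geometric_two) hterm
      (Eventually.of_forall fun i α => norm_dF_term_le (nA_nonneg _ _) α)
    rwa [tsum_zero] at this
  exact v.hasBasis_nhds.tendsto_right_iff.2 fun δ hδ => hdF.eventually (gt_mem_nhds hδ)

lemma Fs.continuous_coeff (hL : L ≠ 0) (hκ : κ₀ ≠ 0) (k : ℤ × ℤ) :
    Continuous fun u : Fs L κ₀ => u.1 k := by
  rcases eq_or_ne k 0 with rfl | hk
  · exact continuous_const.congr fun u => u.2.1.1.symm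
  refine continuous_iff_continuousAt.2 fun u => ?_
  refine (u.hasBasis_nhds.tendsto_iff Metric.nhds_basis_ball).2 fun ε hε => ?_
  set c := |L| * |κ₀ * knorm k|
  have hc : 0 < c := by have := knorm_pos hk; positivity
  refine ⟨c * ε / (1 + c * ε) / 2, by positivity, fun y (hy : dF L κ₀ u y < _) => ?_⟩
  rw [Metric.mem_ball, dist_comm, dist_eq_norm]
  by_contra! hεy
  linarith [half_div_one_add_le_dF (by positivity) (mul_le_mul_of_nonneg_left hεy hc.le)]

end FrechetMetric

lemma InH.add {u v : ℤ × ℤ → Vc} (hu : InH u) (hv : InH v) : InH (u + v) := by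
  obtain ⟨hu0, hur, hud⟩ := hu
  obtain ⟨hv0, hvr, hvd⟩ := hv
  refine ⟨by simp [hu0, hv0], fun k i => by simp [hur k i, hvr k i], fun k => ?_⟩
  simp only [Pi.add_apply, PiLp.add_apply]
  linear_combination hud k + hvd k

/-- The Fourier coefficients of the real, divergence-free shear flow `2t cos(κ₀ j x₁) e₂`. -/
def shearMode (j : ℕ) (t : ℝ) : ℤ × ℤ → Vc := fun k =>
  if k.2 = 0 ∧ k.1.natAbs = j then EuclideanSpace.single 1 (t : ℂ) else 0

section ShearMode

variable {j : ℕ} {t : ℝ}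

lemma shearMode_apply_self : shearMode j t ((j : ℤ), 0) = EuclideanSpace.single 1 (t : ℂ) :=
  if_pos ⟨rfl, Int.natAbs_natCast j⟩

lemma shearMode_eq_zero_of_notMem {k : ℤ × ℤ}
    (hk : k ∉ ({((j : ℤ), 0), (-(j : ℤ), 0)} : Finset (ℤ × ℤ))) : shearMode j t k = 0 := by
  refine if_neg fun ⟨h2, h1⟩ => hk ?_
  obtain ⟨a, b⟩ := k
  subst h1
  dsimp only at h2
  subst h2
  rcases Int.natAbs_eq a with ha | ha <;> rw [← ha] <;> simp

lemma inH_shearMode (hj : j ≠ 0) : InH (shearMode j t) := by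
  refine ⟨if_neg (by simpa [eq_comm] using hj), fun k i => ?_, fun k => ?_⟩
  · by_cases hk : k.2 = 0 ∧ k.1.natAbs = j
    · have hk' : (-k).2 = 0 ∧ (-k).1.natAbs = j := by simpa using hk
      simp only [shearMode, if_pos hk, if_pos hk']
      fin_cases i <;> simp
    · simp [shearMode, if_neg hk]
  · by_cases hk : k.2 = 0 ∧ k.1.natAbs = j
    · rw [shearMode, if_pos hk, hk.1]
      simp
    · simp [shearMode, if_neg hk]

lemma summableA_shearMode (κ₀ : ℝ) (α : ℕ) : SummableA κ₀ (shearMode j t) α :=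
  summable_of_ne_finset_zero (s := {((j : ℤ), 0), (-(j : ℤ), 0)}) fun k hk => by
    rw [shearMode_eq_zero_of_notMem hk, norm_zero, sq, mul_zero, mul_zero]

lemma sqA_shearMode (hj : j ≠ 0) (L κ₀ : ℝ) (α : ℕ) :
    sqA L κ₀ (shearMode j t) α = 2 * L ^ 2 * (κ₀ * j) ^ (2 * α) * t ^ 2 := by
  have hne : ((j : ℤ), (0 : ℤ)) ≠ (-(j : ℤ), 0) := by simpa [Prod.ext_iff] using hj
  rw [sqA, tsum_eq_sum fun k hk => by
      rw [shearMode_eq_zero_of_notMem hk, norm_zero, sq, mul_zero, mul_zero],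
    Finset.sum_pair hne]
  simp [shearMode, knorm]
  ring

end ShearMode

lemma norm_coeff_le_of_mem_EbnSet {L κ₀ b : ℝ} (hL : 0 < L) {n : ℕ} {u : Fs L κ₀}
    (hu : u ∈ EbnSet L κ₀ b n) (k : ℤ × ℤ) :
    ‖u.1 k‖ ≤ n / L * Real.exp (-(b * Real.log (knorm k + Real.exp 1) ^ 2)) := by
  obtain ⟨hsum, hle⟩ := hu
  set e := Real.exp (b * Real.log (knorm k + Real.exp 1) ^ 2)
  have hterm : ebTerm b u.1 k = (e * ‖u.1 k‖) ^ 2 := by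
    rw [ebTerm, mul_pow, ← Real.exp_nat_mul]
    push_cast
    ring_nf
  have hsq : (L * (e * ‖u.1 k‖)) ^ 2 ≤ (n : ℝ) ^ 2 := by
    rw [Real.sqrt_le_left (Nat.cast_nonneg n)] at hle
    calc (L * (e * ‖u.1 k‖)) ^ 2 = L ^ 2 * ebTerm b u.1 k := by rw [hterm]; ring
      _ ≤ L ^ 2 * ∑' k, ebTerm b u.1 k := by
        gcongr
        exact hsum.le_tsum k fun k _ => by unfold ebTerm; positivity
      _ ≤ n ^ 2 := hle
  have hle' := (pow_le_pow_iff_left₀ (by positivity) (Nat.cast_nonneg n) two_ne_zero).1 hsq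
  rw [Real.exp_neg, ← div_eq_mul_inv, div_div, le_div_iff₀ (by positivity)]
  linarith

theorem isNowhereDense_EbnSet {L κ₀ b : ℝ} (hL : 0 < L) (hκ : κ₀ ≠ 0) (hb : 0 < b) (n : ℕ) :
    IsNowhereDense (EbnSet L κ₀ b n) := by
  rw [isNowhereDense_iff_forall_notMem_nhds]
  intro v hv hnhds
  set c : ℕ → ℝ := fun j => Real.exp (-(b * Real.log (j + Real.exp 1) ^ 2)) with hc
  set t : ℕ → ℝ := fun j => (2 * n / L + 1) * c j with ht
  let w : ℕ → Fs L κ₀ := fun j =>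
    ⟨v.1 + shearMode (j + 1) (t (j + 1)), v.2.1.add (inH_shearMode j.succ_ne_zero),
      fun α => (v.2.2 α).add (summableA_shearMode κ₀ α)⟩
  have hw : Tendsto w atTop (𝓝 v) := Fs.tendsto_of_tendsto_sqA fun α => by
    have hdecay := ((tendsto_pow_mul_exp_neg_mul_log_add_sq hb α).comp
      (tendsto_natCast_atTop_atTop.comp (tendsto_add_atTop_nat 1))).pow 2
    have := hdecay.const_mul (2 * L ^ 2 * κ₀ ^ (2 * α) * (2 * n / L + 1) ^ 2)
    rw [zero_pow two_ne_zero, mul_zero] at this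
    refine this.congr fun j => ?_
    have hsqA : sqA L κ₀ (fun k => v.1 k - (w j).1 k) α =
        sqA L κ₀ (shearMode (j + 1) (t (j + 1))) α := by
      simp [sqA, w]
    rw [hsqA, sqA_shearMode j.succ_ne_zero, mul_pow]
    simp only [Function.comp_apply, ht, hc]
    push_cast
    ring
  obtain ⟨j, hj⟩ := (hw.eventually hnhds).exists
  set k : ℤ × ℤ := (((j + 1 : ℕ) : ℤ), 0)
  have hcoeff {u : Fs L κ₀} (hu : u ∈ EbnSet L κ₀ b n) : ‖u.1 k‖ ≤ n / L * c (j + 1) := by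
    have := norm_coeff_le_of_mem_EbnSet hL hu k
    rwa [knorm_natCast_zero] at this
  have hsub : closure (EbnSet L κ₀ b n) ⊆ {u | ‖u.1 k‖ ≤ n / L * c (j + 1)} :=
    closure_minimal (fun u hu => hcoeff hu)
      (isClosed_le (continuous_norm.comp (Fs.continuous_coeff hL.ne' hκ k)) continuous_const)
  have hwk : ‖(w j).1 k‖ ≤ n / L * c (j + 1) := hsub hj
  have hmode : ‖(w j).1 k - v.1 k‖ = t (j + 1) := by
    rw [show (w j).1 k - v.1 k = shearMode (j + 1) (t (j + 1)) k from add_sub_cancel_left _ _,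
      shearMode_apply_self, PiLp.norm_single, Complex.norm_real,
      Real.norm_of_nonneg (by positivity)]
  have htc : t (j + 1) = 2 * (n / L * c (j + 1)) + c (j + 1) := by simp only [ht]; ring
  have hc0 : 0 < c (j + 1) := Real.exp_pos _
  linarith [norm_sub_le ((w j).1 k) (v.1 k), hcoeff hv]

/-- For every `b > 0`, the set `∪_{m≥1} ∪_{n≥1} E_{b/m, n}` is of
first Baire category (meagre) in the metric space `(F, d)`. -/
theorem union_Ebm_meagre (L κ₀ : ℝ) (hL : 0 < L) (hκ₀ : κ₀ = 2 * Real.pi / L)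
    (b : ℝ) (hb : 0 < b) :
    IsMeagre (⋃ (m : ℕ) (_ : 1 ≤ m) (n : ℕ) (_ : 1 ≤ n),
      EbnSet L κ₀ (b / (m : ℝ)) n) := by
  have hκ : κ₀ ≠ 0 := by rw [hκ₀]; positivity
  refine isMeagre_iUnion fun m => isMeagre_iUnion fun hm => isMeagre_iUnion fun n =>
    isMeagre_iUnion fun _ => (isNowhereDense_EbnSet hL hκ ?_ n).isMeagre
  exact div_pos hb (by exact_mod_cast hm)
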